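/- The following four identities hold: (1) E*_0 E_d E*_d E_0 = (φ_1 φ_2 ⋯ φ_d / (τ_d(θ_d) τ*_d(θ*_d))) E*_0 E_0; (2) E*_0 E_0 E*_d E_d = (ϕ_1 ϕ_2 ⋯ ϕ_d / (η_d(θ_0) τ*_d(θ*_d))) E*_0 E_d; (3) E*_d E_d E*_0 E_0 = (ϕ_1 ϕ_2 ⋯ ϕ_d / (τ_d(θ_d) η*_d(θ*_0))) E*_d E_0; (4) E*_d E_0 E*_0 E_d = (φ_1 φ_2 ⋯ φ_d / (η_d(θ_0) η*_d(θ*_0))) E*_d E_d. Here the scalars τ_d(θ_d), η_d(θ_0), τ*_d(θ*_d), η*_d(θ*_0) are nonzero since θ_0,…,θ_d are mutually distinct and θ*_0,…,θ*_d are mutually distinct. -/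

import Mathlib

open Polynomial Matrix Finset

noncomputable section

/-- The lower bidiagonal matrix with diagonal entries `θ 0, …, θ d` and
subdiagonal entries `1`. -/
def matA {K : Type*} [Field K] (d : ℕ) (θ : ℕ → K) :
    Matrix (Fin (d + 1)) (Fin (d + 1)) K :=
  Matrix.of fun i j =>
    if (i : ℕ) = (j : ℕ) then θ (i : ℕ)
    else if (i : ℕ) = (j : ℕ) + 1 then 1 else 0

/-- The upper bidiagonal matrix with diagonal entries `θs 0, …, θs d` and
superdiagonal entries `φ 1, …, φ d` (the `(i-1,i)`-entry is `φ i`). -/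
def matAs {K : Type*} [Field K] (d : ℕ) (θs φ : ℕ → K) :
    Matrix (Fin (d + 1)) (Fin (d + 1)) K :=
  Matrix.of fun i j =>
    if (i : ℕ) = (j : ℕ) then θs (i : ℕ)
    else if (j : ℕ) = (i : ℕ) + 1 then φ (j : ℕ) else 0

/-- The primitive idempotent `E_i = ∏_{j ≠ i} (M - θ_j I)/(θ_i - θ_j)` of a matrix `M`
with eigenvalues `θ 0, …, θ d`. -/
def primIdem {K : Type*} [Field K] (d : ℕ) (θ : ℕ → K)
    (M : Matrix (Fin (d + 1)) (Fin (d + 1)) K) (i : ℕ) :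
    Matrix (Fin (d + 1)) (Fin (d + 1)) K :=
  Polynomial.aeval M (∏ j ∈ (Finset.range (d + 1)).erase i,
    (Polynomial.C ((θ i - θ j)⁻¹) * (Polynomial.X - Polynomial.C (θ j))))

/-- `τ_i(λ) = (λ - θ_0)(λ - θ_1)⋯(λ - θ_{i-1})`. -/
def tauPoly {K : Type*} [Field K] (θ : ℕ → K) (i : ℕ) : Polynomial K :=
  ∏ k ∈ Finset.range i, (Polynomial.X - Polynomial.C (θ k))

/-- `η_i(λ) = (λ - θ_d)(λ - θ_{d-1})⋯(λ - θ_{d-i+1})`. -/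
def etaPoly {K : Type*} [Field K] (d : ℕ) (θ : ℕ → K) (i : ℕ) : Polynomial K :=
  ∏ k ∈ Finset.range i, (Polynomial.X - Polynomial.C (θ (d - k)))

/-!
The four idempotents `E_0, E_d, E*_0, E*_d` have rank one: the columns of `E_i` are
`θ_i`-eigenvectors and its rows are left `θ_i`-eigenvectors, and for a bidiagonal matrix with
distinct diagonal entries these are multiples of explicit vectors (a standard basis vector, or
a vector whose entries are products of ratios such as `φ_k / (θ*_0 - θ*_k)`). Each four-fold
product is therefore a multiple of the corresponding two-fold product, the factor being built
from corner entries of these vectors and from the two scalars `tr (E*_0 E_0)` and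
`tr (E_d E*_d)`. In the basis `v_0, …, v_d` the matrices `A` and `A*` are bidiagonal again,
with `θ` reversed and `φ` replaced by `ϕ`; computed there, both traces become products of
corner entries, which is how the second split sequence enters.
-/

section Lagrange

variable {K A : Type*} [Field K] [Ring A] [Algebra K A] {ι : Type*} [DecidableEq ι]
  {s : Finset ι} {v : ι → K} {i : ι}

theorem Lagrange.X_sub_C_mul_basis (hi : i ∈ s) :
    (X - C (v i)) * Lagrange.basis s v i
      = C (Lagrange.nodalWeight s v i) * Lagrange.nodal s v := by
  rw [Lagrange.nodal_eq_mul_nodal_erase hi, Lagrange.basis, Lagrange.nodalWeight,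
    Lagrange.nodal, map_prod]
  simp only [Lagrange.basisDivisor, prod_mul_distrib]
  ring

theorem mul_aeval_lagrangeBasis {a : A} (ha : aeval a (Lagrange.nodal s v) = 0) (hi : i ∈ s) :
    a * aeval a (Lagrange.basis s v i) = v i • aeval a (Lagrange.basis s v i) := by
  have h := congrArg (aeval a) (Lagrange.X_sub_C_mul_basis (v := v) hi)
  rwa [map_mul, map_mul, ha, mul_zero, map_sub, aeval_X, aeval_C, sub_mul, sub_eq_zero,
    ← Algebra.smul_def] at h

theorem aeval_lagrangeBasis_mul {a : A} (ha : aeval a (Lagrange.nodal s v) = 0) (hi : i ∈ s) :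
    aeval a (Lagrange.basis s v i) * a = v i • aeval a (Lagrange.basis s v i) := by
  rw [← mul_aeval_lagrangeBasis ha hi]
  simpa using ((Commute.all (Lagrange.basis s v i) X).map (aeval a)).eq

end Lagrange

theorem aeval_mul_eq_mul_aeval {R A : Type*} [CommSemiring R] [Semiring A] [Algebra R A]
    {a b c : A} (h : a * c = c * b) (p : R[X]) : aeval a p * c = c * aeval b p := by
  induction p using Polynomial.induction_on' with
  | add p q hp hq => rw [map_add, map_add, add_mul, mul_add, hp, hq]
  | monomial k r =>
    simp only [aeval_monomial, ← Algebra.smul_def, smul_mul_assoc, mul_smul_comm,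
      ((SemiconjBy.pow_right h.symm k).eq).symm]

section Matrices

variable {R : Type*} [CommRing R] {n : Type*}

theorem eq_smul_vecMulVec_of_col_of_row {E : Matrix n n R} {x y : n → R} {a b : n}
    (hcol : ∀ j, E.col j = E a j • x) (hrow : E.row a = E a b • y) :
    E = E a b • vecMulVec x y := by
  ext i j
  have h1 := congrFun (hcol j) i
  have h2 := congrFun hrow j
  simp only [col_apply, row_apply, Pi.smul_apply, smul_eq_mul] at h1 h2
  rw [Matrix.smul_apply, vecMulVec_apply, h1, h2, smul_eq_mul]
  ring

variable [Fintype n]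

theorem vecMulVec_mul_vecMulVec_eq_smul (a b c e : n → R) :
    vecMulVec a b * vecMulVec c e = (b ⬝ᵥ c) • vecMulVec a e := by
  rw [vecMulVec_mul_vecMulVec, vecMulVec_smul]

theorem trace_vecMulVec_mul_vecMulVec (a b c e : n → R) :
    trace (vecMulVec a b * vecMulVec c e) = (b ⬝ᵥ c) * (e ⬝ᵥ a) := by
  rw [vecMulVec_mul_vecMulVec_eq_smul, trace_smul, trace_vecMulVec, smul_eq_mul,
    dotProduct_comm a e]

variable [DecidableEq n]

theorem trace_mul_eq_of_mul_eq {P M N M' N' : Matrix n n R} (hP : IsUnit P)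
    (hM : M * P = P * M') (hN : N * P = P * N') : trace (M * N) = trace (M' * N') := by
  have h : M * N * P = P * (M' * N') := by
    rw [Matrix.mul_assoc, hN, ← Matrix.mul_assoc, hM, Matrix.mul_assoc]
  rw [← trace_conj' hP (M * N), Matrix.mul_assoc, h, ← Matrix.mul_assoc,
    nonsing_inv_mul _ ((isUnit_iff_isUnit_det P).1 hP), Matrix.one_mul]

theorem mulVec_col_of_mul_eq_smul {M E : Matrix n n R} {μ : R} (h : M * E = μ • E) (j : n) :
    M *ᵥ E.col j = μ • E.col j := by
  rw [← mulVec_single_one, mulVec_mulVec, h, smul_mulVec]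

theorem row_vecMul_of_mul_eq_smul {M E : Matrix n n R} {μ : R} (h : E * M = μ • E) (i : n) :
    E.row i ᵥ* M = μ • E.row i := by
  rw [← single_one_vecMul, vecMul_vecMul, h, vecMul_smul]

theorem aeval_mulVec_of_mulVec_eq_smul {M : Matrix n n R} {x : n → R} {μ : R}
    (hx : M *ᵥ x = μ • x) (p : R[X]) : aeval M p *ᵥ x = p.eval μ • x := by
  have := Module.End.aeval_apply_of_mem_apply_eq_smul (f := toLinAlgEquiv' M) (p := p) hx
  rwa [aeval_algEquiv, AlgHom.comp_apply, AlgEquiv.coe_toAlgHom, toLinAlgEquiv'_apply] at this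

theorem aeval_transpose (M : Matrix n n R) (p : R[X]) : aeval Mᵀ p = (aeval M p)ᵀ := by
  induction p using Polynomial.induction_on' with
  | add p q hp hq => rw [map_add, map_add, hp, hq, transpose_add]
  | monomial k a => simp [aeval_monomial, ← Algebra.smul_def, transpose_pow]

end Matrices

section PrimIdem

variable {K : Type*} [Field K] {d : ℕ} {θ : ℕ → K} {M : Matrix (Fin (d + 1)) (Fin (d + 1)) K}
  {i : ℕ}

theorem primIdem_eq_aeval_lagrangeBasis (M : Matrix (Fin (d + 1)) (Fin (d + 1)) K) (i : ℕ) :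
    primIdem d θ M i = aeval M (Lagrange.basis (range (d + 1)) θ i) := rfl

theorem mul_primIdem (hM : aeval M (Lagrange.nodal (range (d + 1)) θ) = 0) (hi : i ≤ d) :
    M * primIdem d θ M i = θ i • primIdem d θ M i :=
  mul_aeval_lagrangeBasis hM (mem_range.2 (Nat.lt_succ_of_le hi))

theorem primIdem_mul (hM : aeval M (Lagrange.nodal (range (d + 1)) θ) = 0) (hi : i ≤ d) :
    primIdem d θ M i * M = θ i • primIdem d θ M i :=
  aeval_lagrangeBasis_mul hM (mem_range.2 (Nat.lt_succ_of_le hi))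

theorem primIdem_mulVec_of_mulVec_eq (hθ : Set.InjOn θ (range (d + 1))) (hi : i ≤ d)
    {x : Fin (d + 1) → K} (hx : M *ᵥ x = θ i • x) : primIdem d θ M i *ᵥ x = x := by
  rw [primIdem_eq_aeval_lagrangeBasis, aeval_mulVec_of_mulVec_eq_smul hx,
    Lagrange.eval_basis_self hθ (mem_range.2 (Nat.lt_succ_of_le hi)), one_smul]

theorem primIdem_transpose (M : Matrix (Fin (d + 1)) (Fin (d + 1)) K) (i : ℕ) :
    primIdem d θ Mᵀ i = (primIdem d θ M i)ᵀ :=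
  aeval_transpose M _

theorem vecMul_primIdem_of_vecMul_eq (hθ : Set.InjOn θ (range (d + 1))) (hi : i ≤ d)
    {x : Fin (d + 1) → K} (hx : x ᵥ* M = θ i • x) : x ᵥ* primIdem d θ M i = x := by
  rw [← mulVec_transpose, ← primIdem_transpose]
  exact primIdem_mulVec_of_mulVec_eq hθ hi (by rwa [mulVec_transpose])

theorem primIdem_mul_eq_mul_primIdem {N P : Matrix (Fin (d + 1)) (Fin (d + 1)) K}
    (h : M * P = P * N) (i : ℕ) : primIdem d θ M i * P = P * primIdem d θ N i :=
  aeval_mul_eq_mul_aeval h _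

theorem primIdem_reverse (M : Matrix (Fin (d + 1)) (Fin (d + 1)) K) (hi : i ≤ d) :
    primIdem d θ M i = primIdem d (fun k => θ (d - k)) M (d - i) := by
  unfold primIdem
  congr 1
  refine Finset.prod_nbij' (fun j => d - j) (fun j => d - j) ?_ ?_ ?_ ?_ ?_ <;>
    intro j hj <;> simp only [Finset.mem_erase, Finset.mem_range] at hj ⊢
  · omega
  · omega
  · omega
  · omega
  · rw [Nat.sub_sub_self hi, Nat.sub_sub_self (by omega)]

end PrimIdem

theorem sub_ne_zero_of_injOn {G : Type*} [AddGroup G] {d : ℕ} {θ : ℕ → G}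
    (hθ : Set.InjOn θ (range (d + 1))) {i j : ℕ} (hi : i ≤ d) (hj : j ≤ d) (hij : i ≠ j) :
    θ i - θ j ≠ 0 :=
  sub_ne_zero.2 (hθ.ne (mem_range.2 (by omega)) (mem_range.2 (by omega)) hij)

section LowerBidiag

variable {K : Type*} [Field K]

def lowerBidiag (d : ℕ) (θ s : ℕ → K) : Matrix (Fin (d + 1)) (Fin (d + 1)) K :=
  Matrix.of fun i j =>
    if (i : ℕ) = (j : ℕ) then θ i else if (i : ℕ) = (j : ℕ) + 1 then s i else 0

def eigvecZero (d : ℕ) (θ s : ℕ → K) : Fin (d + 1) → K :=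
  fun i => ∏ k ∈ Icc 1 (i : ℕ), s k / (θ 0 - θ k)

def leftEigvecLast (d : ℕ) (θ s : ℕ → K) : Fin (d + 1) → K :=
  fun j => ∏ k ∈ Ico (j : ℕ) d, s (k + 1) / (θ d - θ k)

variable {d : ℕ} {θ s : ℕ → K}

theorem matA_eq_lowerBidiag : matA d θ = lowerBidiag d θ 1 := rfl

theorem matAs_eq_transpose_lowerBidiag (φ : ℕ → K) :
    matAs d θ φ = (lowerBidiag d θ φ)ᵀ := by
  ext i j
  simp only [matAs, lowerBidiag, transpose_apply, of_apply, eq_comm (a := (i : ℕ))]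
  split_ifs <;> simp_all

theorem lowerBidiag_mulVec_zero (x : Fin (d + 1) → K) :
    (lowerBidiag d θ s *ᵥ x) 0 = θ 0 * x 0 := by
  rw [mulVec, dotProduct, Fintype.sum_eq_single 0]
  · simp [lowerBidiag]
  · intro j hj
    have : (0 : ℕ) ≠ j := (Fin.val_ne_iff.mpr hj).symm
    simp [lowerBidiag, this]

theorem lowerBidiag_mulVec_succ (x : Fin (d + 1) → K) (i : Fin d) :
    (lowerBidiag d θ s *ᵥ x) i.succ = θ (i + 1) * x i.succ + s (i + 1) * x i.castSucc := by
  rw [mulVec, dotProduct, Finset.sum_eq_add i.succ i.castSucc Fin.castSucc_lt_succ.ne']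
  · simp [lowerBidiag]
  · intro j _ hj
    simp only [lowerBidiag, of_apply, Fin.val_succ]
    rw [if_neg, if_neg, zero_mul]
    · exact fun h => hj.2 (Fin.ext (by rw [Fin.val_castSucc]; omega))
    · exact fun h => hj.1 (Fin.ext (by rw [Fin.val_succ]; omega))
  · simp
  · simp

theorem vecMul_lowerBidiag_last (x : Fin (d + 1) → K) :
    (x ᵥ* lowerBidiag d θ s) (Fin.last d) = x (Fin.last d) * θ d := by
  rw [vecMul, dotProduct, Fintype.sum_eq_single (Fin.last d)]
  · simp [lowerBidiag]
  · intro j hj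
    have := Fin.val_lt_last hj
    simp only [lowerBidiag, of_apply, Fin.val_last]
    rw [if_neg (by omega), if_neg (by omega), mul_zero]

theorem vecMul_lowerBidiag_castSucc (x : Fin (d + 1) → K) (i : Fin d) :
    (x ᵥ* lowerBidiag d θ s) i.castSucc = x i.castSucc * θ i + x i.succ * s (i + 1) := by
  rw [vecMul, dotProduct, Finset.sum_eq_add i.castSucc i.succ Fin.castSucc_lt_succ.ne]
  · simp [lowerBidiag]
  · intro j _ hj
    simp only [lowerBidiag, of_apply, Fin.val_castSucc]
    rw [if_neg, if_neg, mul_zero]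
    · exact fun h => hj.2 (Fin.ext (by rw [Fin.val_succ]; omega))
    · exact fun h => hj.1 (Fin.ext (by rw [Fin.val_castSucc]; omega))
  · simp
  · simp

theorem single_zero_vecMul_lowerBidiag :
    Pi.single 0 1 ᵥ* lowerBidiag d θ s = θ 0 • Pi.single 0 1 := by
  ext j
  rw [single_one_vecMul]
  rcases eq_or_ne j 0 with rfl | hj
  · simp [lowerBidiag]
  · have : (0 : ℕ) ≠ j := (Fin.val_ne_iff.mpr hj).symm
    simp [lowerBidiag, this, hj]

theorem lowerBidiag_mulVec_single_last :
    lowerBidiag d θ s *ᵥ Pi.single (Fin.last d) 1 = θ d • Pi.single (Fin.last d) 1 := by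
  ext i
  rw [mulVec_single_one]
  rcases eq_or_ne i (Fin.last d) with rfl | hi
  · simp [lowerBidiag]
  · have := Fin.val_lt_last hi
    simp only [col_apply, lowerBidiag, of_apply, Fin.val_last]
    rw [if_neg (by omega), if_neg (by omega)]
    simp [hi]

theorem aeval_lowerBidiag_nodal :
    aeval (lowerBidiag d θ s) (Lagrange.nodal (range (d + 1)) θ) = 0 := by
  have htri : (lowerBidiag d θ s)ᵀ.IsUpperTriangular := fun i j (hji : j < i) => by
    have : (j : ℕ) < i := hji
    simp only [transpose_apply, lowerBidiag, of_apply]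
    rw [if_neg (by omega), if_neg (by omega)]
  have hchar : (lowerBidiag d θ s).charpoly = Lagrange.nodal (range (d + 1)) θ := by
    rw [← charpoly_transpose, charpoly_of_isUpperTriangular _ htri, Lagrange.nodal,
      ← Fin.prod_univ_eq_prod_range]
    simp [lowerBidiag]
  rw [← hchar, aeval_self_charpoly]

theorem eq_smul_eigvecZero_of_mulVec_eq (hθ : Set.InjOn θ (range (d + 1))) {x : Fin (d + 1) → K}
    (hx : lowerBidiag d θ s *ᵥ x = θ 0 • x) : x = x 0 • eigvecZero d θ s := by
  funext i
  induction i using Fin.induction with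
  | zero => simp [eigvecZero]
  | succ i ih =>
    have h := congrFun hx i.succ
    have hne : θ 0 - θ (i + 1) ≠ 0 := sub_ne_zero_of_injOn hθ (by omega) (by omega) (by omega)
    have hvec : eigvecZero d θ s i.succ
        = eigvecZero d θ s i.castSucc * (s (i + 1) / (θ 0 - θ (i + 1))) := by
      rw [eigvecZero, eigvecZero, Fin.val_succ, Finset.prod_Icc_succ_top (by omega),
        Fin.val_castSucc]
    simp only [lowerBidiag_mulVec_succ, Pi.smul_apply, smul_eq_mul, ih] at h ⊢
    rw [hvec]
    field_simp
    linear_combination -h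

theorem eq_smul_single_last_of_mulVec_eq (hθ : Set.InjOn θ (range (d + 1)))
    {x : Fin (d + 1) → K} (hx : lowerBidiag d θ s *ᵥ x = θ d • x) :
    x = x (Fin.last d) • Pi.single (Fin.last d) 1 := by
  suffices h : ∀ i : Fin (d + 1), i ≠ Fin.last d → x i = 0 by
    funext i
    by_cases hi : i = Fin.last d
    · subst hi; simp
    · simp [h i hi, hi]
  intro i
  induction i using Fin.induction with
  | zero =>
    intro h0
    have h := congrFun hx 0
    have hne : θ d - θ 0 ≠ 0 := sub_ne_zero_of_injOn hθ le_rfl (by omega)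
      (fun h => h0 (Fin.ext (by simp [h])))
    rw [lowerBidiag_mulVec_zero, Pi.smul_apply, smul_eq_mul] at h
    have : (θ d - θ 0) * x 0 = 0 := by linear_combination -h
    exact (mul_eq_zero.1 this).resolve_left hne
  | succ i ih =>
    intro hi
    have h := congrFun hx i.succ
    have hne : θ d - θ (i + 1) ≠ 0 := sub_ne_zero_of_injOn hθ le_rfl (by omega)
      (fun h => hi (Fin.ext (by simp [h])))
    rw [lowerBidiag_mulVec_succ, Pi.smul_apply, smul_eq_mul,
      ih (Fin.castSucc_lt_last i).ne, mul_zero, add_zero] at h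
    have : (θ d - θ (i + 1)) * x i.succ = 0 := by linear_combination -h
    exact (mul_eq_zero.1 this).resolve_left hne

theorem eq_smul_single_zero_of_vecMul_eq (hθ : Set.InjOn θ (range (d + 1)))
    {x : Fin (d + 1) → K} (hx : x ᵥ* lowerBidiag d θ s = θ 0 • x) :
    x = x 0 • Pi.single 0 1 := by
  suffices h : ∀ i : Fin (d + 1), i ≠ 0 → x i = 0 by
    funext i
    by_cases hi : i = 0
    · subst hi; simp
    · simp [h i hi, hi]
  intro i
  induction i using Fin.reverseInduction with
  | last =>
    intro h0
    have h := congrFun hx (Fin.last d)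
    have hne : θ 0 - θ d ≠ 0 := sub_ne_zero_of_injOn hθ (by omega) le_rfl
      (fun h => h0 (Fin.ext (by simp [← h])))
    rw [vecMul_lowerBidiag_last, Pi.smul_apply, smul_eq_mul] at h
    have : (θ 0 - θ d) * x (Fin.last d) = 0 := by linear_combination -h
    exact (mul_eq_zero.1 this).resolve_left hne
  | cast i ih =>
    intro hi
    have h := congrFun hx i.castSucc
    have hne : θ 0 - θ i ≠ 0 := sub_ne_zero_of_injOn hθ (by omega) (by omega)
      (fun h => hi (Fin.ext (by simp [← h])))
    rw [vecMul_lowerBidiag_castSucc, Pi.smul_apply, smul_eq_mul,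
      ih (Fin.succ_ne_zero i), zero_mul, add_zero] at h
    have : (θ 0 - θ i) * x i.castSucc = 0 := by linear_combination -h
    exact (mul_eq_zero.1 this).resolve_left hne

theorem eq_smul_leftEigvecLast_of_vecMul_eq (hθ : Set.InjOn θ (range (d + 1)))
    {x : Fin (d + 1) → K} (hx : x ᵥ* lowerBidiag d θ s = θ d • x) :
    x = x (Fin.last d) • leftEigvecLast d θ s := by
  funext i
  induction i using Fin.reverseInduction with
  | last => simp [leftEigvecLast]
  | cast i ih =>
    have h := congrFun hx i.castSucc
    have hne : θ d - θ i ≠ 0 := sub_ne_zero_of_injOn hθ le_rfl (by omega) (by omega)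
    have hvec : leftEigvecLast d θ s i.castSucc
        = s (i + 1) / (θ d - θ i) * leftEigvecLast d θ s i.succ := by
      simp [leftEigvecLast, Finset.prod_eq_prod_Ico_succ_bot i.isLt]
    simp only [vecMul_lowerBidiag_castSucc, Pi.smul_apply, smul_eq_mul, ih] at h ⊢
    rw [hvec]
    field_simp
    linear_combination -h

theorem primIdem_lowerBidiag_zero (hθ : Set.InjOn θ (range (d + 1))) :
    primIdem d θ (lowerBidiag d θ s) 0 = vecMulVec (eigvecZero d θ s) (Pi.single 0 1) := by
  set E := primIdem d θ (lowerBidiag d θ s) 0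
  have hE : E = E 0 0 • vecMulVec (eigvecZero d θ s) (Pi.single 0 1) :=
    eq_smul_vecMulVec_of_col_of_row
      (fun j => eq_smul_eigvecZero_of_mulVec_eq hθ
        (mulVec_col_of_mul_eq_smul (mul_primIdem aeval_lowerBidiag_nodal d.zero_le) j))
      (eq_smul_single_zero_of_vecMul_eq hθ
        (row_vecMul_of_mul_eq_smul (primIdem_mul aeval_lowerBidiag_nodal d.zero_le) 0))
  have h : Pi.single 0 1 ᵥ* E = Pi.single 0 1 :=
    vecMul_primIdem_of_vecMul_eq hθ d.zero_le single_zero_vecMul_lowerBidiag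
  rw [hE, vecMul_smul, vecMul_vecMulVec, single_dotProduct, one_mul] at h
  have h00 : E 0 0 = 1 := by simpa [eigvecZero] using congrFun h 0
  rw [hE, h00, one_smul]

theorem primIdem_lowerBidiag_last (hθ : Set.InjOn θ (range (d + 1))) :
    primIdem d θ (lowerBidiag d θ s) d
      = vecMulVec (Pi.single (Fin.last d) 1) (leftEigvecLast d θ s) := by
  set E := primIdem d θ (lowerBidiag d θ s) d
  have hE : E = E (Fin.last d) (Fin.last d)
      • vecMulVec (Pi.single (Fin.last d) 1) (leftEigvecLast d θ s) :=
    eq_smul_vecMulVec_of_col_of_row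
      (fun j => eq_smul_single_last_of_mulVec_eq hθ
        (mulVec_col_of_mul_eq_smul (mul_primIdem aeval_lowerBidiag_nodal le_rfl) j))
      (eq_smul_leftEigvecLast_of_vecMul_eq hθ
        (row_vecMul_of_mul_eq_smul (primIdem_mul aeval_lowerBidiag_nodal le_rfl) _))
  have h : E *ᵥ Pi.single (Fin.last d) 1 = Pi.single (Fin.last d) 1 :=
    primIdem_mulVec_of_mulVec_eq hθ le_rfl lowerBidiag_mulVec_single_last
  rw [hE, smul_mulVec, vecMulVec_mulVec, dotProduct_single, mul_one] at h
  have hdd : E (Fin.last d) (Fin.last d) = 1 := by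
    simpa [leftEigvecLast] using congrFun h (Fin.last d)
  rw [hE, hdd, one_smul]

theorem eigvecZero_last :
    eigvecZero d θ s (Fin.last d) = (∏ k ∈ Icc 1 d, s k) / (etaPoly d θ d).eval (θ 0) := by
  rw [eigvecZero, Fin.val_last, prod_div_distrib, etaPoly, eval_prod]
  congr 1
  refine Finset.prod_nbij' (fun k => d - k) (fun k => d - k) ?_ ?_ ?_ ?_ ?_ <;>
    intro k hk <;> simp only [mem_Icc, mem_range] at hk ⊢
  · omega
  · omega
  · omega
  · omega
  · simp [Nat.sub_sub_self hk.2]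

theorem leftEigvecLast_zero :
    leftEigvecLast d θ s 0 = (∏ k ∈ Icc 1 d, s k) / (tauPoly θ d).eval (θ d) := by
  rw [leftEigvecLast, Fin.val_zero, prod_div_distrib, tauPoly, eval_prod,
    ← Ico_add_one_right_eq_Icc, ← prod_Ico_add' s 0 d 1, range_eq_Ico]
  simp

end LowerBidiag

section Reverse

variable {K : Type*} [Field K] {d : ℕ}

theorem injOn_reverse {α : Type*} {θ : ℕ → α} (hθ : Set.InjOn θ (range (d + 1))) :
    Set.InjOn (fun k => θ (d - k)) (range (d + 1)) := by
  intro i hi j hj h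
  rw [mem_coe, mem_range] at hi hj
  have := hθ (mem_range.2 (by omega)) (mem_range.2 (by omega)) h
  omega

theorem tauPoly_reverse (θ : ℕ → K) (i : ℕ) :
    tauPoly (fun k => θ (d - k)) i = etaPoly d θ i := rfl

theorem etaPoly_reverse (θ : ℕ → K) {i : ℕ} (hi : i ≤ d) :
    etaPoly d (fun k => θ (d - k)) i = tauPoly θ i :=
  prod_congr rfl fun k hk => by
    simp only [Nat.sub_sub_self (show k ≤ d by rw [mem_range] at hk; omega)]

end Reverse

section LeonardPair

variable {K : Type*} [Field K] {d : ℕ} {θ θs φ ϕ : ℕ → K}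

theorem primIdem_matA_zero (hθ : Set.InjOn θ (range (d + 1))) :
    primIdem d θ (matA d θ) 0 = vecMulVec (eigvecZero d θ 1) (Pi.single 0 1) := by
  rw [matA_eq_lowerBidiag, primIdem_lowerBidiag_zero hθ]

theorem primIdem_matA_last (hθ : Set.InjOn θ (range (d + 1))) :
    primIdem d θ (matA d θ) d
      = vecMulVec (Pi.single (Fin.last d) 1) (leftEigvecLast d θ 1) := by
  rw [matA_eq_lowerBidiag, primIdem_lowerBidiag_last hθ]

theorem primIdem_matAs_zero (φ : ℕ → K) (hθs : Set.InjOn θs (range (d + 1))) :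
    primIdem d θs (matAs d θs φ) 0 = vecMulVec (Pi.single 0 1) (eigvecZero d θs φ) := by
  rw [matAs_eq_transpose_lowerBidiag, primIdem_transpose, primIdem_lowerBidiag_zero hθs,
    transpose_vecMulVec]

theorem primIdem_matAs_last (φ : ℕ → K) (hθs : Set.InjOn θs (range (d + 1))) :
    primIdem d θs (matAs d θs φ) d
      = vecMulVec (leftEigvecLast d θs φ) (Pi.single (Fin.last d) 1) := by
  rw [matAs_eq_transpose_lowerBidiag, primIdem_transpose, primIdem_lowerBidiag_last hθs,
    transpose_vecMulVec]

theorem matA_mul_eq_mul_lowerBidiag {v : ℕ → Fin (d + 1) → K}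
    (hv1 : ∀ i < d, (matA d θ).mulVec (v i) - θ (d - i) • v i = v (i + 1))
    (hv2 : (matA d θ).mulVec (v d) - θ 0 • v d = 0) :
    matA d θ * Matrix.of (fun i j : Fin (d + 1) => v j i)
      = Matrix.of (fun i j : Fin (d + 1) => v j i) * lowerBidiag d (fun k => θ (d - k)) 1 := by
  ext i j
  change (matA d θ *ᵥ v j) i = ((fun k : Fin (d + 1) => v k i) ᵥ* lowerBidiag d _ 1) j
  induction j using Fin.lastCases with
  | last =>
    have h := congrFun hv2 i
    simp only [Pi.sub_apply, Pi.smul_apply, smul_eq_mul, Pi.zero_apply] at h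
    rw [vecMul_lowerBidiag_last, Fin.val_last, Nat.sub_self]
    linear_combination h
  | cast j =>
    have h := congrFun (hv1 j j.isLt) i
    simp only [Pi.sub_apply, Pi.smul_apply, smul_eq_mul] at h
    rw [vecMul_lowerBidiag_castSucc, Fin.val_castSucc, Fin.val_succ, Pi.one_apply]
    linear_combination h

theorem matAs_mul_eq_mul_transpose_lowerBidiag {v : ℕ → Fin (d + 1) → K}
    (hv3 : ∀ i, 1 ≤ i → i ≤ d →
      (matAs d θs φ).mulVec (v i) - θs i • v i = ϕ i • v (i - 1))
    (hv4 : (matAs d θs φ).mulVec (v 0) - θs 0 • v 0 = 0) :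
    matAs d θs φ * Matrix.of (fun i j : Fin (d + 1) => v j i)
      = Matrix.of (fun i j : Fin (d + 1) => v j i) * (lowerBidiag d θs ϕ)ᵀ := by
  ext i j
  change (matAs d θs φ *ᵥ v j) i
    = ((fun k : Fin (d + 1) => v k i) ᵥ* (lowerBidiag d θs ϕ)ᵀ) j
  rw [vecMul_transpose]
  induction j using Fin.cases with
  | zero =>
    have h := congrFun hv4 i
    simp only [Pi.sub_apply, Pi.smul_apply, smul_eq_mul, Pi.zero_apply] at h
    rw [lowerBidiag_mulVec_zero, Fin.val_zero]
    linear_combination h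
  | succ j =>
    have h := congrFun (hv3 (j + 1) (by omega) (by omega)) i
    simp only [Pi.sub_apply, Pi.smul_apply, smul_eq_mul, Nat.add_sub_cancel] at h
    rw [lowerBidiag_mulVec_succ, Fin.val_succ, Fin.val_castSucc]
    linear_combination h

variable {P : Matrix (Fin (d + 1)) (Fin (d + 1)) K}

theorem eigvecZero_dotProduct_eigvecZero (hθ : Set.InjOn θ (range (d + 1)))
    (hθs : Set.InjOn θs (range (d + 1))) (hP : IsUnit P)
    (hA : matA d θ * P = P * lowerBidiag d (fun k => θ (d - k)) 1)
    (hAs : matAs d θs φ * P = P * (lowerBidiag d θs ϕ)ᵀ) :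
    eigvecZero d θs φ ⬝ᵥ eigvecZero d θ 1
      = (∏ k ∈ Icc 1 d, ϕ k)
          / ((etaPoly d θs d).eval (θs 0) * (etaPoly d θ d).eval (θ 0)) := by
  have hE : primIdem d θ (matA d θ) 0 * P
      = P * primIdem d (fun k => θ (d - k)) (lowerBidiag d (fun k => θ (d - k)) 1) d := by
    rw [primIdem_mul_eq_mul_primIdem hA, primIdem_reverse _ d.zero_le, Nat.sub_zero]
  calc eigvecZero d θs φ ⬝ᵥ eigvecZero d θ 1
      = trace (primIdem d θs (matAs d θs φ) 0 * primIdem d θ (matA d θ) 0) := by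
        rw [primIdem_matAs_zero φ hθs, primIdem_matA_zero hθ, trace_vecMulVec_mul_vecMulVec]
        simp
    _ = trace (primIdem d θs (lowerBidiag d θs ϕ)ᵀ 0
          * primIdem d (fun k => θ (d - k)) (lowerBidiag d (fun k => θ (d - k)) 1) d) :=
        trace_mul_eq_of_mul_eq hP (primIdem_mul_eq_mul_primIdem hAs 0) hE
    _ = _ := by
      rw [primIdem_transpose, primIdem_lowerBidiag_zero hθs, transpose_vecMulVec,
        primIdem_lowerBidiag_last (injOn_reverse hθ), trace_vecMulVec_mul_vecMulVec]
      simp only [dotProduct_single, mul_one]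
      rw [eigvecZero_last, leftEigvecLast_zero, tauPoly_reverse, Nat.sub_self]
      simp only [Pi.one_apply, prod_const_one]
      ring

theorem leftEigvecLast_dotProduct_leftEigvecLast (hθ : Set.InjOn θ (range (d + 1)))
    (hθs : Set.InjOn θs (range (d + 1))) (hP : IsUnit P)
    (hA : matA d θ * P = P * lowerBidiag d (fun k => θ (d - k)) 1)
    (hAs : matAs d θs φ * P = P * (lowerBidiag d θs ϕ)ᵀ) :
    leftEigvecLast d θ 1 ⬝ᵥ leftEigvecLast d θs φ
      = (∏ k ∈ Icc 1 d, ϕ k)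
          / ((tauPoly θ d).eval (θ d) * (tauPoly θs d).eval (θs d)) := by
  have hE : primIdem d θ (matA d θ) d * P
      = P * primIdem d (fun k => θ (d - k)) (lowerBidiag d (fun k => θ (d - k)) 1) 0 := by
    rw [primIdem_mul_eq_mul_primIdem hA, primIdem_reverse _ le_rfl, Nat.sub_self]
  calc leftEigvecLast d θ 1 ⬝ᵥ leftEigvecLast d θs φ
      = trace (primIdem d θ (matA d θ) d * primIdem d θs (matAs d θs φ) d) := by
        rw [primIdem_matAs_last φ hθs, primIdem_matA_last hθ, trace_vecMulVec_mul_vecMulVec]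
        simp
    _ = trace (primIdem d (fun k => θ (d - k)) (lowerBidiag d (fun k => θ (d - k)) 1) 0
          * primIdem d θs (lowerBidiag d θs ϕ)ᵀ d) :=
        trace_mul_eq_of_mul_eq hP hE (primIdem_mul_eq_mul_primIdem hAs d)
    _ = _ := by
      rw [primIdem_transpose, primIdem_lowerBidiag_last hθs, transpose_vecMulVec,
        primIdem_lowerBidiag_zero (injOn_reverse hθ), trace_vecMulVec_mul_vecMulVec]
      simp only [single_dotProduct, one_mul]
      rw [eigvecZero_last, leftEigvecLast_zero, etaPoly_reverse θ le_rfl, Nat.sub_zero]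
      simp only [Pi.one_apply, prod_const_one]
      ring

end LeonardPair

theorem four_idempotent_products_general {K : Type*} [Field K] (d : ℕ) (θ θs φ ϕ : ℕ → K)
    (hθ : ∀ i ≤ d, ∀ j ≤ d, θ i = θ j → i = j)
    (hθs : ∀ i ≤ d, ∀ j ≤ d, θs i = θs j → i = j)
    (v : ℕ → Fin (d + 1) → K)
    (hvli : LinearIndependent K fun i : Fin (d + 1) => v (i : ℕ))
    (hv1 : ∀ i < d, (matA d θ).mulVec (v i) - θ (d - i) • v i = v (i + 1))
    (hv2 : (matA d θ).mulVec (v d) - θ 0 • v d = 0)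
    (hv3 : ∀ i, 1 ≤ i → i ≤ d →
      (matAs d θs φ).mulVec (v i) - θs i • v i = ϕ i • v (i - 1))
    (hv4 : (matAs d θs φ).mulVec (v 0) - θs 0 • v 0 = 0) :
    (primIdem d θs (matAs d θs φ) 0 * primIdem d θ (matA d θ) d * primIdem d θs (matAs d θs φ) d * primIdem d θ (matA d θ) 0 = ((∏ k ∈ Finset.Icc (1) (d), φ k) / ((tauPoly θ d).eval (θ d) * (tauPoly θs d).eval (θs d))) • (primIdem d θs (matAs d θs φ) 0 * primIdem d θ (matA d θ) 0))
    ∧ (primIdem d θs (matAs d θs φ) 0 * primIdem d θ (matA d θ) 0 * primIdem d θs (matAs d θs φ) d * primIdem d θ (matA d θ) d = ((∏ k ∈ Finset.Icc (1) (d), ϕ k) / ((etaPoly d θ d).eval (θ 0) * (tauPoly θs d).eval (θs d))) • (primIdem d θs (matAs d θs φ) 0 * primIdem d θ (matA d θ) d))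
    ∧ (primIdem d θs (matAs d θs φ) d * primIdem d θ (matA d θ) d * primIdem d θs (matAs d θs φ) 0 * primIdem d θ (matA d θ) 0 = ((∏ k ∈ Finset.Icc (1) (d), ϕ k) / ((tauPoly θ d).eval (θ d) * (etaPoly d θs d).eval (θs 0))) • (primIdem d θs (matAs d θs φ) d * primIdem d θ (matA d θ) 0))
    ∧ (primIdem d θs (matAs d θs φ) d * primIdem d θ (matA d θ) 0 * primIdem d θs (matAs d θs φ) 0 * primIdem d θ (matA d θ) d = ((∏ k ∈ Finset.Icc (1) (d), φ k) / ((etaPoly d θ d).eval (θ 0) * (etaPoly d θs d).eval (θs 0))) • (primIdem d θs (matAs d θs φ) d * primIdem d θ (matA d θ) d)) := by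
  have hθ' : Set.InjOn θ (range (d + 1)) := fun i hi j hj h =>
    hθ i (Nat.le_of_lt_succ (mem_range.1 hi)) j (Nat.le_of_lt_succ (mem_range.1 hj)) h
  have hθs' : Set.InjOn θs (range (d + 1)) := fun i hi j hj h =>
    hθs i (Nat.le_of_lt_succ (mem_range.1 hi)) j (Nat.le_of_lt_succ (mem_range.1 hj)) h
  have hP : IsUnit (Matrix.of fun i j : Fin (d + 1) => v j i) :=
    linearIndependent_cols_iff_isUnit.1 hvli
  have hA := matA_mul_eq_mul_lowerBidiag hv1 hv2
  have hAs := matAs_mul_eq_mul_transpose_lowerBidiag hv3 hv4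
  have hS := eigvecZero_dotProduct_eigvecZero hθ' hθs' hP hA hAs
  have hT := leftEigvecLast_dotProduct_leftEigvecLast hθ' hθs' hP hA hAs
  rw [primIdem_matA_zero hθ', primIdem_matA_last hθ', primIdem_matAs_zero φ hθs',
    primIdem_matAs_last φ hθs']
  simp only [vecMulVec_mul_vecMulVec_eq_smul, smul_mul, smul_smul, dotProduct_single,
    single_dotProduct, mul_one, one_mul, hS, hT, eigvecZero_last, leftEigvecLast_zero,
    Pi.one_apply, prod_const_one, Pi.single_eq_same]
  refine ⟨?_, ?_, ?_, ?_⟩ <;> congr 1 <;> ring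

theorem four_idempotent_products {K : Type*} [Field K] (d : ℕ) (θ θs φ ϕ : ℕ → K)
    (hθ : ∀ i ≤ d, ∀ j ≤ d, θ i = θ j → i = j)
    (hθs : ∀ i ≤ d, ∀ j ≤ d, θs i = θs j → i = j)
    (hφ : ∀ i, 1 ≤ i → i ≤ d → φ i ≠ 0)
    (hE0 : ∀ i ≤ d, ∀ j ≤ d, 1 < |(i : ℤ) - (j : ℤ)| →
      primIdem d θ (matA d θ) i * matAs d θs φ * primIdem d θ (matA d θ) j = 0)
    (hE1 : ∀ i ≤ d, ∀ j ≤ d, |(i : ℤ) - (j : ℤ)| = 1 →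
      primIdem d θ (matA d θ) i * matAs d θs φ * primIdem d θ (matA d θ) j ≠ 0)
    (hEs0 : ∀ i ≤ d, ∀ j ≤ d, 1 < |(i : ℤ) - (j : ℤ)| →
      primIdem d θs (matAs d θs φ) i * matA d θ * primIdem d θs (matAs d θs φ) j = 0)
    (hEs1 : ∀ i ≤ d, ∀ j ≤ d, |(i : ℤ) - (j : ℤ)| = 1 →
      primIdem d θs (matAs d θs φ) i * matA d θ * primIdem d θs (matAs d θs φ) j ≠ 0)
    (hϕ : ∀ i, 1 ≤ i → i ≤ d → ϕ i ≠ 0)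
    (v : ℕ → Fin (d + 1) → K)
    (hvli : LinearIndependent K fun i : Fin (d + 1) => v (i : ℕ))
    (hvsp : Submodule.span K (Set.range fun i : Fin (d + 1) => v (i : ℕ)) = ⊤)
    (hv1 : ∀ i < d, (matA d θ).mulVec (v i) - θ (d - i) • v i = v (i + 1))
    (hv2 : (matA d θ).mulVec (v d) - θ 0 • v d = 0)
    (hv3 : ∀ i, 1 ≤ i → i ≤ d →
      (matAs d θs φ).mulVec (v i) - θs i • v i = ϕ i • v (i - 1))
    (hv4 : (matAs d θs φ).mulVec (v 0) - θs 0 • v 0 = 0) :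
    (primIdem d θs (matAs d θs φ) 0 * primIdem d θ (matA d θ) d * primIdem d θs (matAs d θs φ) d * primIdem d θ (matA d θ) 0 = ((∏ k ∈ Finset.Icc (1) (d), φ k) / ((tauPoly θ d).eval (θ d) * (tauPoly θs d).eval (θs d))) • (primIdem d θs (matAs d θs φ) 0 * primIdem d θ (matA d θ) 0))
    ∧ (primIdem d θs (matAs d θs φ) 0 * primIdem d θ (matA d θ) 0 * primIdem d θs (matAs d θs φ) d * primIdem d θ (matA d θ) d = ((∏ k ∈ Finset.Icc (1) (d), ϕ k) / ((etaPoly d θ d).eval (θ 0) * (tauPoly θs d).eval (θs d))) • (primIdem d θs (matAs d θs φ) 0 * primIdem d θ (matA d θ) d))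
    ∧ (primIdem d θs (matAs d θs φ) d * primIdem d θ (matA d θ) d * primIdem d θs (matAs d θs φ) 0 * primIdem d θ (matA d θ) 0 = ((∏ k ∈ Finset.Icc (1) (d), ϕ k) / ((tauPoly θ d).eval (θ d) * (etaPoly d θs d).eval (θs 0))) • (primIdem d θs (matAs d θs φ) d * primIdem d θ (matA d θ) 0))
    ∧ (primIdem d θs (matAs d θs φ) d * primIdem d θ (matA d θ) 0 * primIdem d θs (matAs d θs φ) 0 * primIdem d θ (matA d θ) d = ((∏ k ∈ Finset.Icc (1) (d), φ k) / ((etaPoly d θ d).eval (θ 0) * (etaPoly d θs d).eval (θs 0))) • (primIdem d θs (matAs d θs φ) d * primIdem d θ (matA d θ) d)) :=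
  four_idempotent_products_general d θ θs φ ϕ hθ hθs v hvli hv1 hv2 hv3 hv4
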